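/- arXiv:2203.14734 — 3 statements merged into one kernel-verified Lean document; each statement's English description precedes it below -/
import Mathlib

section
/- For every n ≥ 1 and every integer k ≥ 2 there exists a constant C = C(n,k) > 0 such that for all R ≥ 1 and all ρ > 0 there exists a smooth function φ : ℝⁿ → [0,1] satisfying: φ = 1 on B(0,R); φ = 0 outside B(0,R+ρ); |∇φ(x)| ≤ (C/ρ) · φ(x)^{1−1/k} for all x ∈ ℝⁿ; and |Δφ(x)| ≤ C · max(ρ^{−1}, ρ^{−2}) · φ(x)^{1−2/k} for all x ∈ ℝⁿ. -/
set_option maxHeartbeats 1000000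

open MeasureTheory Metric Set Filter

/-- The Euclidean Laplacian `Δf = ∑ᵢ ∂²f/∂xᵢ²`. -/
noncomputable def lap {n : ℕ} (f : EuclideanSpace ℝ (Fin n) → ℝ) :
    EuclideanSpace ℝ (Fin n) → ℝ :=
  fun x => ∑ i : Fin n,
    fderiv ℝ (fun y => fderiv ℝ f y (EuclideanSpace.single i 1)) x (EuclideanSpace.single i 1)

namespace CutoffProofAux

noncomputable def b : ℝ → ℝ := fun s => Real.smoothTransition (1 - s)

lemma b_contDiff : ContDiff ℝ (⊤ : ℕ∞) b :=
  Real.smoothTransition.contDiff.comp (contDiff_const.sub contDiff_id)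

lemma b_nonneg (s : ℝ) : 0 ≤ b s := Real.smoothTransition.nonneg _

lemma b_le_one (s : ℝ) : b s ≤ 1 := Real.smoothTransition.le_one _

lemma b_one {s : ℝ} (hs : s ≤ 0) : b s = 1 :=
  Real.smoothTransition.one_of_one_le (by linarith)

lemma b_zero {s : ℝ} (hs : 1 ≤ s) : b s = 0 :=
  Real.smoothTransition.zero_of_nonpos (by linarith)

lemma deriv_b_lt {s : ℝ} (hs : s < 0) : deriv b s = 0 := by
  have h : b =ᶠ[nhds s] fun _ => 1 :=
    Filter.eventuallyEq_of_mem (Iio_mem_nhds hs) (fun t ht => b_one (le_of_lt ht))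
  rw [h.deriv_eq, deriv_const]

lemma deriv_b_gt {s : ℝ} (hs : 1 < s) : deriv b s = 0 := by
  have h : b =ᶠ[nhds s] fun _ => 0 :=
    Filter.eventuallyEq_of_mem (Ioi_mem_nhds hs) (fun t ht => b_zero (le_of_lt ht))
  rw [h.deriv_eq, deriv_const]

lemma deriv2_b_lt {s : ℝ} (hs : s < 0) : deriv (deriv b) s = 0 := by
  have h : deriv b =ᶠ[nhds s] fun _ => 0 :=
    Filter.eventuallyEq_of_mem (Iio_mem_nhds hs) (fun t ht => deriv_b_lt ht)
  rw [h.deriv_eq, deriv_const]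

lemma deriv2_b_gt {s : ℝ} (hs : 1 < s) : deriv (deriv b) s = 0 := by
  have h : deriv b =ᶠ[nhds s] fun _ => 0 :=
    Filter.eventuallyEq_of_mem (Ioi_mem_nhds hs) (fun t ht => deriv_b_gt ht)
  rw [h.deriv_eq, deriv_const]

lemma b_deriv_contDiff : ContDiff ℝ (⊤ : ℕ∞) (deriv b) :=
  (contDiff_infty_iff_deriv.mp b_contDiff).2

lemma b_deriv2_contDiff : ContDiff ℝ (⊤ : ℕ∞) (deriv (deriv b)) :=
  (contDiff_infty_iff_deriv.mp b_deriv_contDiff).2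

lemma b_differentiable : Differentiable ℝ b :=
  b_contDiff.differentiable (by simp)

lemma b_deriv_differentiable : Differentiable ℝ (deriv b) :=
  b_deriv_contDiff.differentiable (by simp)

lemma exists_bound (f : ℝ → ℝ) (hf : Continuous f) (h0 : ∀ s : ℝ, s < 0 → f s = 0)
    (h1 : ∀ s : ℝ, 1 < s → f s = 0) : ∃ M : ℝ, 0 ≤ M ∧ ∀ s, |f s| ≤ M := by
  obtain ⟨s₀, -, hmax⟩ := isCompact_Icc.exists_isMaxOn
    (⟨0, by norm_num⟩ : (Icc (0:ℝ) 1).Nonempty) ((hf.abs).continuousOn)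
  refine ⟨|f s₀|, abs_nonneg _, fun s => ?_⟩
  rcases le_or_gt s 1 with h | h
  · rcases le_or_gt 0 s with h' | h'
    · exact hmax ⟨h', h⟩
    · simp [h0 s h', abs_nonneg]
  · simp [h1 s h, abs_nonneg]

lemma exists_M : ∃ M : ℝ, 0 ≤ M ∧ (∀ s, |deriv b s| ≤ M) ∧ (∀ s, |deriv (deriv b) s| ≤ M) := by
  obtain ⟨M₁, hM₁0, hM₁⟩ := exists_bound (deriv b)
    (b_deriv_contDiff.continuous) (fun s hs => deriv_b_lt hs) (fun s hs => deriv_b_gt hs)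
  obtain ⟨M₂, hM₂0, hM₂⟩ := exists_bound (deriv (deriv b))
    (b_deriv2_contDiff.continuous) (fun s hs => deriv2_b_lt hs) (fun s hs => deriv2_b_gt hs)
  exact ⟨max M₁ M₂, le_max_of_le_left hM₁0,
    fun s => (hM₁ s).trans (le_max_left _ _), fun s => (hM₂ s).trans (le_max_right _ _)⟩

lemma rpow_pow {c : ℝ} (hc : 0 ≤ c) {k m : ℕ} (hk : 0 < k) (hm : m ≤ k) :
    (c ^ k : ℝ) ^ (1 - (m : ℝ) / k) = c ^ (k - m) := by
  have hk' : (k : ℝ) ≠ 0 := Nat.cast_ne_zero.mpr hk.ne'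
  have he : 1 - (m : ℝ) / k = ((k - m : ℕ) : ℝ) / k := by
    rw [Nat.cast_sub hm]; field_simp
  rcases eq_or_lt_of_le hc with h | h
  · rcases eq_or_lt_of_le hm with hmk | hmk
    · subst hmk
      simp [he, ← h, zero_pow hk.ne']
    · have h1 : ((k - m : ℕ) : ℝ) / k ≠ 0 := by
        apply div_ne_zero _ hk'
        exact_mod_cast (Nat.sub_pos_of_lt hmk).ne'
      rw [← h, zero_pow hk.ne', Real.zero_rpow (by rw [he]; exact h1),
        zero_pow (Nat.sub_pos_of_lt hmk).ne']
  · rw [he, ← Real.rpow_natCast c k, ← Real.rpow_mul h.le, ← Real.rpow_natCast c (k - m)]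
    congr 1
    field_simp

lemma grad_scalar {k M C R ρ : ℝ} (hk : 0 ≤ k) (hM : 0 ≤ M) (hρ : 0 < ρ) (hR : 1 ≤ R)
    (hC : 2*k*M ≤ C) :
    k * (M * (1/(ρ*(2*R+ρ)))) * (2*(R+ρ)) ≤ C/ρ := by
  have hD : 0 < ρ*(2*R+ρ) := by nlinarith
  have h1 : k * (M * (1/(ρ*(2*R+ρ)))) * (2*(R+ρ)) = (2*k*M*(R+ρ))/(ρ*(2*R+ρ)) := by
    field_simp
  rw [h1, div_le_div_iff₀ hD hρ]
  have h2 : 0 ≤ 2*k*M := by positivity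
  nlinarith [mul_le_mul_of_nonneg_right hC hD.le, mul_nonneg (mul_nonneg h2 hρ.le) (by linarith : (0:ℝ) ≤ R)]

lemma lap_scalar {n k M C R ρ t : ℝ} (hn : 0 ≤ n) (hk : 0 ≤ k) (hM : 0 ≤ M) (hρ : 0 < ρ)
    (hR : 1 ≤ R) (ht : t ≤ (R+ρ)^2) (hC : 2*n*(k*M) + 4*(k*(M + k*M^2)) ≤ C) :
    2*n*(k*M*(1/(ρ*(2*R+ρ)))) + 4*t*(k*(M + k*M^2)*((1/(ρ*(2*R+ρ)))^2)) ≤ C * max ρ⁻¹ (ρ⁻¹^2) := by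
  have hD : 0 < ρ*(2*R+ρ) := by nlinarith
  have hmax0 : 0 ≤ max ρ⁻¹ (ρ⁻¹^2) := le_trans (by positivity) (le_max_left ρ⁻¹ (ρ⁻¹^2))
  have h1 : 1/(ρ*(2*R+ρ)) ≤ ρ⁻¹ := by
    rw [one_div, inv_le_inv₀ hD hρ]
    nlinarith
  have hkM : 0 ≤ k*M := by positivity
  have hkM2 : 0 ≤ k*(M + k*M^2) := by positivity
  have h2 : t*((1/(ρ*(2*R+ρ)))^2) ≤ ρ⁻¹^2 := by
    have e3 : (R+ρ)/(ρ*(2*R+ρ)) ≤ 1/ρ := by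
      rw [div_le_div_iff₀ hD hρ]
      nlinarith
    calc t*((1/(ρ*(2*R+ρ)))^2) ≤ (R+ρ)^2*((1/(ρ*(2*R+ρ)))^2) :=
          mul_le_mul_of_nonneg_right ht (by positivity)
      _ = ((R+ρ)/(ρ*(2*R+ρ)))^2 := by
          rw [div_pow, div_pow, one_pow, div_eq_mul_inv, div_eq_mul_inv, one_mul]
      _ ≤ (1/ρ)^2 := pow_le_pow_left₀ (by positivity) e3 2
      _ = ρ⁻¹^2 := by rw [one_div]
  have T1 : 2*n*(k*M*(1/(ρ*(2*R+ρ)))) ≤ 2*n*(k*M)*(max ρ⁻¹ (ρ⁻¹^2)) := by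
    calc 2*n*(k*M*(1/(ρ*(2*R+ρ)))) ≤ 2*n*(k*M*(max ρ⁻¹ (ρ⁻¹^2))) := by
          apply mul_le_mul_of_nonneg_left _ (by positivity : (0:ℝ) ≤ 2*n)
          exact mul_le_mul_of_nonneg_left (h1.trans (le_max_left _ _)) hkM
      _ = 2*n*(k*M)*(max ρ⁻¹ (ρ⁻¹^2)) := by ring
  have T2 : 4*t*(k*(M + k*M^2)*((1/(ρ*(2*R+ρ)))^2)) ≤ 4*(k*(M + k*M^2))*(max ρ⁻¹ (ρ⁻¹^2)) := by
    calc 4*t*(k*(M + k*M^2)*((1/(ρ*(2*R+ρ)))^2))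
        = 4*(k*(M + k*M^2))*(t*((1/(ρ*(2*R+ρ)))^2)) := by ring
      _ ≤ 4*(k*(M + k*M^2))*(ρ⁻¹^2) := mul_le_mul_of_nonneg_left h2 (by positivity)
      _ ≤ 4*(k*(M + k*M^2))*(max ρ⁻¹ (ρ⁻¹^2)) :=
          mul_le_mul_of_nonneg_left (le_max_right _ _) (by positivity)
  nlinarith [mul_le_mul_of_nonneg_right hC hmax0]

end CutoffProofAux

open CutoffProofAux in
/-- Cut-off functions with controlled gradient and Laplacian (Section 2.2,
estimates (2.5)–(2.6) of the paper, Euclidean case): for every `n` and `k ≥ 2`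
there is `C = C(n,k)` such that for all `R ≥ 1` and `ρ > 0` there is a smooth
`φ : ℝⁿ → [0,1]` with `φ = 1` on `B(0,R)`, `φ = 0` outside `B(0,R+ρ)`,
`|∇φ| ≤ (C/ρ) φ^{1-1/k}` and `|Δφ| ≤ C max(ρ⁻¹, ρ⁻²) φ^{1-2/k}`. -/
theorem cutoff_function_exists (n k : ℕ) (hn : 1 ≤ n) (hk : 2 ≤ k) :
    ∃ C : ℝ, 0 < C ∧
      ∀ R ρ : ℝ, 1 ≤ R → 0 < ρ →
        ∃ φ : EuclideanSpace ℝ (Fin n) → ℝ,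
          ContDiff ℝ (⊤ : ℕ∞) φ ∧
          (∀ x, φ x ∈ Set.Icc (0:ℝ) 1) ∧
          (∀ x ∈ Metric.ball (0 : EuclideanSpace ℝ (Fin n)) R, φ x = 1) ∧
          (∀ x ∉ Metric.ball (0 : EuclideanSpace ℝ (Fin n)) (R + ρ), φ x = 0) ∧
          (∀ x, ‖fderiv ℝ φ x‖ ≤ C / ρ * φ x ^ (1 - 1 / (k:ℝ))) ∧
          (∀ x, |lap φ x| ≤ C * max ρ⁻¹ (ρ⁻¹ ^ 2) * φ x ^ (1 - 2 / (k:ℝ))) := by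
  classical
  obtain ⟨M, hM0, hM1, hM2⟩ := exists_M
  set C : ℝ := 2*k*M + 2*n*k*M + 4*k*(M + k*M^2) + 1 with hCdef
  have hk0 : (0:ℝ) ≤ (k:ℝ) := Nat.cast_nonneg k
  have hn0 : (0:ℝ) ≤ (n:ℝ) := Nat.cast_nonneg n
  have hC : 0 < C := by
    have h1 : (0:ℝ) ≤ 2*k*M := by positivity
    have h2 : (0:ℝ) ≤ 2*n*k*M := by positivity
    have h3 : (0:ℝ) ≤ 4*k*(M + k*M^2) := by positivity
    linarith
  refine ⟨C, hC, fun R ρ hR hρ => ?_⟩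
  have h2R : (2:ℝ) ≤ 2*R + ρ := by linarith
  set D : ℝ := ρ * (2*R + ρ) with hDdef
  have hD : 0 < D := mul_pos hρ (by linarith)
  set u : ℝ → ℝ := fun t => (t - R^2) / D with hudef
  set g : ℝ → ℝ := fun t => b (u t) ^ k with hgdef
  set q : EuclideanSpace ℝ (Fin n) → ℝ := fun x => ‖x‖^2 with hqdef
  set G₁ : ℝ → ℝ := fun t => (k:ℝ) * (b (u t) ^ (k-1) * (deriv b (u t) * (1/D))) with hG₁def
  set G₂ : ℝ → ℝ := fun t =>
    (k:ℝ) * (((k-1:ℕ):ℝ) * b (u t) ^ (k-1-1) * (deriv b (u t) * (1/D)) * (deriv b (u t) * (1/D)) +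
      b (u t) ^ (k-1) * (deriv (deriv b) (u t) * (1/D) * (1/D))) with hG₂def
  -- 1D derivative facts
  have hu : ∀ t : ℝ, HasDerivAt u (1/D) t := by
    intro t
    simpa using ((hasDerivAt_id t).sub_const (R^2)).div_const D
  have hbu : ∀ t : ℝ, HasDerivAt (fun t => b (u t)) (deriv b (u t) * (1/D)) t := by
    intro t
    exact ((b_differentiable (u t)).hasDerivAt).comp t (hu t)
  have hdbu : ∀ t : ℝ, HasDerivAt (fun t => deriv b (u t))
      (deriv (deriv b) (u t) * (1/D)) t := by
    intro t
    exact ((b_deriv_differentiable (u t)).hasDerivAt).comp t (hu t)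
  have hg' : ∀ t : ℝ, HasDerivAt g (G₁ t) t := by
    intro t
    have h : (k:ℝ) * b (u t) ^ (k-1) * (deriv b (u t) * (1/D)) = G₁ t := by
      rw [hG₁def]; ring
    exact h ▸ (hbu t).pow k
  have hG₁' : ∀ t : ℝ, HasDerivAt G₁ (G₂ t) t := by
    intro t
    have hA : HasDerivAt (fun t => b (u t) ^ (k-1))
        (((k-1:ℕ):ℝ) * b (u t) ^ (k-1-1) * (deriv b (u t) * (1/D))) t := (hbu t).pow (k-1)
    have hB : HasDerivAt (fun t => deriv b (u t) * (1/D))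
        (deriv (deriv b) (u t) * (1/D) * (1/D)) t := (hdbu t).mul_const (1/D)
    exact (hA.mul hB).const_mul (k:ℝ)
  -- multivariable facts
  have hq' : ∀ x, HasFDerivAt q (2 • innerSL ℝ x) x := fun x =>
    (hasStrictFDerivAt_norm_sq x).hasFDerivAt
  set φ : EuclideanSpace ℝ (Fin n) → ℝ := g ∘ q with hφdef
  have hφ' : ∀ x, HasFDerivAt φ (G₁ (q x) • (2 • innerSL ℝ x)) x := fun x =>
    (hg' (q x)).comp_hasFDerivAt x (hq' x)
  have hφcd : ContDiff ℝ (⊤ : ℕ∞) φ := by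
    have hucd : ContDiff ℝ (⊤ : ℕ∞) u := (contDiff_id.sub contDiff_const).div_const D
    have hgcd : ContDiff ℝ (⊤ : ℕ∞) g := (b_contDiff.comp hucd).pow k
    exact hgcd.comp (contDiff_norm_sq ℝ)
  -- pointwise formula for first partials
  have hF : ∀ (y : EuclideanSpace ℝ (Fin n)) (i : Fin n),
      fderiv ℝ φ y (EuclideanSpace.single i 1) = G₁ (q y) * (2 * y i) := by
    intro y i
    rw [(hφ' y).fderiv]
    simp [EuclideanSpace.inner_single_right, real_inner_comm, mul_comm]
  have hsum : ∀ x : EuclideanSpace ℝ (Fin n), ∑ i, (x i)^2 = q x := by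
    intro x
    rw [hqdef]
    simp only []
    rw [EuclideanSpace.norm_eq, Real.sq_sqrt (by positivity)]
    exact Finset.sum_congr rfl (fun i _ => by rw [Real.norm_eq_abs, sq_abs])
  have hlap : ∀ x, lap φ x = 2*(n:ℝ)*G₁ (q x) + 4*(q x)*G₂ (q x) := by
    intro x
    have hterm : ∀ i : Fin n,
        fderiv ℝ (fun y => fderiv ℝ φ y (EuclideanSpace.single i 1)) x
          (EuclideanSpace.single i 1) = 2*G₁ (q x) + 4*G₂ (q x)*(x i)^2 := by
      intro i
      have hfun : (fun y => fderiv ℝ φ y (EuclideanSpace.single i 1))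
          = fun y => G₁ (q y) * (2 * y i) := funext fun y => hF y i
      rw [hfun]
      have hc : HasFDerivAt (fun y : EuclideanSpace ℝ (Fin n) => G₁ (q y))
          (G₂ (q x) • (2 • innerSL ℝ x)) x := (hG₁' (q x)).comp_hasFDerivAt x (hq' x)
      have hd0 : HasFDerivAt (⇑(EuclideanSpace.proj i) : EuclideanSpace ℝ (Fin n) → ℝ)
          (EuclideanSpace.proj i : EuclideanSpace ℝ (Fin n) →L[ℝ] ℝ) x :=
        (EuclideanSpace.proj i : EuclideanSpace ℝ (Fin n) →L[ℝ] ℝ).hasFDerivAt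
      have hd : HasFDerivAt (fun y : EuclideanSpace ℝ (Fin n) => 2 * y i)
          ((2:ℝ) • (EuclideanSpace.proj i : EuclideanSpace ℝ (Fin n) →L[ℝ] ℝ)) x :=
        hd0.const_mul (2:ℝ)
      rw [(show HasFDerivAt (fun y : EuclideanSpace ℝ (Fin n) => G₁ (q y) * (2 * y i)) _ x from hc.mul hd).fderiv]
      simp [EuclideanSpace.inner_single_right, EuclideanSpace.single_apply]
      ring
    rw [lap]
    calc ∑ i : Fin n, fderiv ℝ (fun y => fderiv ℝ φ y (EuclideanSpace.single i 1)) x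
          (EuclideanSpace.single i 1)
        = ∑ _i : Fin n, (2*G₁ (q x)) + 4*G₂ (q x)*(∑ i, (x i)^2) := by
          rw [Finset.mul_sum, ← Finset.sum_add_distrib]
          exact Finset.sum_congr rfl (fun i _ => hterm i)
      _ = 2*(n:ℝ)*G₁ (q x) + 4*(q x)*G₂ (q x) := by
          rw [Finset.sum_const, Finset.card_univ, Fintype.card_fin, nsmul_eq_mul, hsum x]
          ring
  -- basic value facts
  have hφx : ∀ x, φ x = b (u (q x)) ^ k := fun _ => rfl
  have hk0' : k ≠ 0 := by omega
  have h1D : (0:ℝ) ≤ 1/D := (one_div_pos.mpr hD).le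
  have hmem : ∀ x, φ x ∈ Set.Icc (0:ℝ) 1 := fun x =>
    ⟨pow_nonneg (b_nonneg _) k, pow_le_one₀ (b_nonneg _) (b_le_one _)⟩
  have hone : ∀ x ∈ Metric.ball (0 : EuclideanSpace ℝ (Fin n)) R, φ x = 1 := by
    intro x hx
    rw [mem_ball_zero_iff] at hx
    have hqx : q x < R^2 := by
      rw [hqdef]
      simp only []
      nlinarith [norm_nonneg x]
    have hu0 : u (q x) ≤ 0 := by
      rw [hudef]
      exact le_of_lt (div_neg_of_neg_of_pos (by linarith) hD)
    rw [hφx x, b_one hu0, one_pow]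
  have hzero : ∀ x ∉ Metric.ball (0 : EuclideanSpace ℝ (Fin n)) (R + ρ), φ x = 0 := by
    intro x hx
    rw [mem_ball_zero_iff, not_lt] at hx
    have hqx : (R+ρ)^2 ≤ q x := by
      rw [hqdef]
      simp only []
      nlinarith [norm_nonneg x]
    have hu1 : 1 ≤ u (q x) := by
      rw [hudef]
      simp only []
      rw [le_div_iff₀ hD, hDdef]
      nlinarith
    rw [hφx x, b_zero hu1, zero_pow hk0']
  refine ⟨φ, hφcd, hmem, hone, hzero, ?_, ?_⟩
  · -- gradient estimate
    intro x
    have hβ0 : 0 ≤ b (u (q x)) := b_nonneg _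
    have hrpow : φ x ^ (1 - 1/(k:ℝ)) = b (u (q x)) ^ (k-1) := by
      rw [hφx x]
      have := rpow_pow hβ0 (show 0 < k by omega) (show 1 ≤ k by omega)
      simpa using this
    have hRHS0 : 0 ≤ C / ρ * φ x ^ (1 - 1/(k:ℝ)) :=
      mul_nonneg (div_nonneg hC.le hρ.le) (Real.rpow_nonneg (hmem x).1 _)
    rcases le_or_gt ‖x‖ (R + ρ) with hx | hx
    · have hnorm : ‖fderiv ℝ φ x‖ ≤ |G₁ (q x)| * (2 * ‖x‖) := by
        rw [(hφ' x).fderiv, norm_smul, Real.norm_eq_abs]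
        apply mul_le_mul_of_nonneg_left _ (abs_nonneg _)
        rw [two_smul]
        calc ‖innerSL ℝ x + innerSL ℝ x‖ ≤ ‖innerSL ℝ x‖ + ‖innerSL ℝ x‖ := norm_add_le _ _
          _ = 2 * ‖x‖ := by rw [innerSL_apply_norm]; ring
      have habs : |G₁ (q x)| ≤ (k:ℝ) * (b (u (q x)) ^ (k-1) * (M * (1/D))) := by
        simp only [hG₁def]
        rw [abs_mul, abs_mul, abs_mul, abs_of_nonneg hk0,
          abs_of_nonneg (pow_nonneg hβ0 _), abs_of_nonneg h1D]
        exact mul_le_mul_of_nonneg_left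
          (mul_le_mul_of_nonneg_left
            (mul_le_mul_of_nonneg_right (hM1 _) h1D) (pow_nonneg hβ0 _)) hk0
      have hC1 : 2*(k:ℝ)*M ≤ C := by
        rw [hCdef]
        linarith [mul_nonneg (mul_nonneg hn0 hk0) hM0,
          mul_nonneg hk0 (add_nonneg hM0 (mul_nonneg hk0 (sq_nonneg M)))]
      calc ‖fderiv ℝ φ x‖ ≤ |G₁ (q x)| * (2 * ‖x‖) := hnorm
        _ ≤ ((k:ℝ) * (b (u (q x)) ^ (k-1) * (M * (1/D)))) * (2*(R+ρ)) := by
            apply mul_le_mul habs (by linarith) (by positivity)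
            exact mul_nonneg hk0 (mul_nonneg (pow_nonneg hβ0 _) (mul_nonneg hM0 h1D))
        _ = b (u (q x)) ^ (k-1) * ((k:ℝ) * (M * (1/D)) * (2*(R+ρ))) := by ring
        _ ≤ b (u (q x)) ^ (k-1) * (C/ρ) := by
            apply mul_le_mul_of_nonneg_left _ (pow_nonneg hβ0 _)
            rw [hDdef]
            exact grad_scalar hk0 hM0 hρ hR hC1
        _ = C / ρ * φ x ^ (1 - 1/(k:ℝ)) := by rw [hrpow]; ring
    · have hu1 : 1 < u (q x) := by
        rw [hudef]
        simp only []
        rw [lt_div_iff₀ hD, hDdef]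
        have hqx : (R+ρ)^2 < q x := by
          rw [hqdef]
          simp only []
          nlinarith [norm_nonneg x]
        nlinarith
      have hG0 : G₁ (q x) = 0 := by
        simp only [hG₁def]
        rw [deriv_b_gt hu1]
        ring
      rw [(hφ' x).fderiv, hG0, zero_smul, norm_zero]
      exact hRHS0
  · -- Laplacian estimate
    intro x
    have hβ0 : 0 ≤ b (u (q x)) := b_nonneg _
    have hβ1 : b (u (q x)) ≤ 1 := b_le_one _
    have hrpow : φ x ^ (1 - 2/(k:ℝ)) = b (u (q x)) ^ (k-2) := by
      rw [hφx x]
      have := rpow_pow hβ0 (show 0 < k by omega) hk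
      simpa using this
    have hmax0 : 0 ≤ max ρ⁻¹ (ρ⁻¹^2) := le_trans (by positivity) (le_max_left _ _)
    have hRHS0 : 0 ≤ C * max ρ⁻¹ (ρ⁻¹^2) * φ x ^ (1 - 2/(k:ℝ)) :=
      mul_nonneg (mul_nonneg hC.le hmax0) (Real.rpow_nonneg (hmem x).1 _)
    have ht0 : 0 ≤ q x := by rw [hqdef]; simp only []; positivity
    rcases le_or_gt ‖x‖ (R + ρ) with hx | hx
    · have hβpow : b (u (q x)) ^ (k-1) ≤ b (u (q x)) ^ (k-2) :=
        pow_le_pow_of_le_one hβ0 hβ1 (by omega)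
      have habs1 : |G₁ (q x)| ≤ (k:ℝ)*M*(1/D) * b (u (q x)) ^ (k-2) := by
        simp only [hG₁def, abs_mul, abs_pow, abs_of_nonneg hβ0, abs_of_nonneg h1D,
          abs_of_nonneg hk0]
        calc (k:ℝ) * (b (u (q x)) ^ (k-1) * (|deriv b (u (q x))| * (1/D)))
            ≤ (k:ℝ) * (b (u (q x)) ^ (k-2) * (M * (1/D))) := by
              apply mul_le_mul_of_nonneg_left _ hk0
              exact mul_le_mul hβpow (mul_le_mul_of_nonneg_right (hM1 _) h1D)
                (mul_nonneg (abs_nonneg _) h1D) (pow_nonneg hβ0 _)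
          _ = (k:ℝ)*M*(1/D) * b (u (q x)) ^ (k-2) := by ring
      have hkk : k - 1 - 1 = k - 2 := by omega
      have habs2 : |G₂ (q x)| ≤ (k:ℝ)*(M + (k:ℝ)*M^2)*((1/D)^2) * b (u (q x)) ^ (k-2) := by
        simp only [hG₂def, hkk]
        have hA : |((k-1:ℕ):ℝ) * b (u (q x)) ^ (k-2) * (deriv b (u (q x)) * (1/D)) *
            (deriv b (u (q x)) * (1/D))| ≤
            (k:ℝ) * b (u (q x)) ^ (k-2) * (M * (1/D)) * (M * (1/D)) := by
          simp only [abs_mul, abs_pow, Nat.abs_cast, abs_of_nonneg hβ0, abs_of_nonneg h1D]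
          have f1 : ((k-1:ℕ):ℝ) ≤ (k:ℝ) := Nat.cast_le.mpr (by omega)
          have f2 : |deriv b (u (q x))| * (1/D) ≤ M * (1/D) :=
            mul_le_mul_of_nonneg_right (hM1 _) h1D
          have p2 : 0 ≤ |deriv b (u (q x))| * (1/D) := mul_nonneg (abs_nonneg _) h1D
          have sa : ((k-1:ℕ):ℝ) * b (u (q x)) ^ (k-2) ≤ (k:ℝ) * b (u (q x)) ^ (k-2) :=
            mul_le_mul_of_nonneg_right f1 (pow_nonneg hβ0 _)
          have sb := mul_le_mul sa f2 p2 (mul_nonneg hk0 (pow_nonneg hβ0 _))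
          exact mul_le_mul sb f2 p2 (mul_nonneg (mul_nonneg hk0 (pow_nonneg hβ0 _))
            (mul_nonneg hM0 h1D))
        have hB : |b (u (q x)) ^ (k-1) * (deriv (deriv b) (u (q x)) * (1/D) * (1/D))| ≤
            b (u (q x)) ^ (k-2) * (M * (1/D) * (1/D)) := by
          simp only [abs_mul, abs_pow, abs_of_nonneg hβ0, abs_of_nonneg h1D]
          exact mul_le_mul hβpow
            (mul_le_mul_of_nonneg_right (mul_le_mul_of_nonneg_right (hM2 _) h1D) h1D)
            (mul_nonneg (mul_nonneg (abs_nonneg _) h1D) h1D) (pow_nonneg hβ0 _)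
        calc |(k:ℝ) * (((k-1:ℕ):ℝ) * b (u (q x)) ^ (k-2) * (deriv b (u (q x)) * (1/D)) *
              (deriv b (u (q x)) * (1/D)) +
              b (u (q x)) ^ (k-1) * (deriv (deriv b) (u (q x)) * (1/D) * (1/D)))|
            = (k:ℝ) * |((k-1:ℕ):ℝ) * b (u (q x)) ^ (k-2) * (deriv b (u (q x)) * (1/D)) *
              (deriv b (u (q x)) * (1/D)) +
              b (u (q x)) ^ (k-1) * (deriv (deriv b) (u (q x)) * (1/D) * (1/D))| := by
              rw [abs_mul, abs_of_nonneg hk0]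
          _ ≤ (k:ℝ) * ((k:ℝ) * b (u (q x)) ^ (k-2) * (M * (1/D)) * (M * (1/D)) +
              b (u (q x)) ^ (k-2) * (M * (1/D) * (1/D))) := by
              apply mul_le_mul_of_nonneg_left _ hk0
              exact (abs_add_le _ _).trans (add_le_add hA hB)
          _ = (k:ℝ)*(M + (k:ℝ)*M^2)*((1/D)^2) * b (u (q x)) ^ (k-2) := by ring
      have hC2 : 2*(n:ℝ)*((k:ℝ)*M) + 4*((k:ℝ)*(M + (k:ℝ)*M^2)) ≤ C := by
        rw [hCdef]
        linarith [mul_nonneg (mul_nonneg (by norm_num : (0:ℝ) ≤ 2) hk0) hM0]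
      have htle : q x ≤ (R+ρ)^2 := by
        rw [hqdef]
        simp only []
        nlinarith [norm_nonneg x]
      calc |lap φ x| = |2*(n:ℝ)*G₁ (q x) + 4*(q x)*G₂ (q x)| := by rw [hlap x]
        _ ≤ 2*(n:ℝ)*|G₁ (q x)| + 4*(q x)*|G₂ (q x)| := by
            refine (abs_add_le _ _).trans (add_le_add ?_ ?_)
            · rw [abs_mul, abs_of_nonneg (by positivity : (0:ℝ) ≤ 2*(n:ℝ))]
            · rw [abs_mul, abs_of_nonneg (by positivity : (0:ℝ) ≤ 4*(q x))]
        _ ≤ 2*(n:ℝ)*((k:ℝ)*M*(1/D) * b (u (q x)) ^ (k-2)) +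
            4*(q x)*((k:ℝ)*(M + (k:ℝ)*M^2)*((1/D)^2) * b (u (q x)) ^ (k-2)) := by
            refine add_le_add ?_ ?_
            · exact mul_le_mul_of_nonneg_left habs1 (by positivity)
            · exact mul_le_mul_of_nonneg_left habs2 (by positivity)
        _ = (2*(n:ℝ)*((k:ℝ)*M*(1/D)) + 4*(q x)*((k:ℝ)*(M + (k:ℝ)*M^2)*((1/D)^2))) *
            b (u (q x)) ^ (k-2) := by ring
        _ ≤ (C * max ρ⁻¹ (ρ⁻¹^2)) * b (u (q x)) ^ (k-2) := by
            apply mul_le_mul_of_nonneg_right _ (pow_nonneg hβ0 _)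
            rw [hDdef]
            exact lap_scalar hn0 hk0 hM0 hρ hR htle hC2
        _ = C * max ρ⁻¹ (ρ⁻¹^2) * φ x ^ (1 - 2/(k:ℝ)) := by rw [hrpow]
    · have hu1 : 1 < u (q x) := by
        rw [hudef]
        simp only []
        rw [lt_div_iff₀ hD, hDdef]
        have hqx : (R+ρ)^2 < q x := by
          rw [hqdef]
          simp only []
          nlinarith [norm_nonneg x]
        nlinarith
      have hG10 : G₁ (q x) = 0 := by
        simp only [hG₁def]
        rw [deriv_b_gt hu1]
        ring
      have hG20 : G₂ (q x) = 0 := by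
        simp only [hG₂def]
        rw [deriv_b_gt hu1, b_zero hu1.le, zero_pow (by omega : k-1 ≠ 0)]
        ring
      rw [hlap x, hG10, hG20]
      simpa using hRHS0
end

section
/- Let k > 1 and 0 ≤ τ₀ < 1/2, and define (τ_i) by τ_{i+1} = k(1+τ_i) − 1/2. Then the partial products P_j = ∏_{i=0}^{j−1} (1+2τ_i) / ( 2(1+τ_i) ) converge as j → ∞ to the limit (1+2τ₀) / ( 2(1+τ₀) + (k−1)^{−1} ), and this limit lies in the open interval (0,1). -/
open Filter

/-- The exponent `α` in equation (3.3) of the paper: for the recursion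
`τ_{i+1} = k(1+τ_i) - 1/2` with `k > 1` and `0 ≤ τ₀ < 1/2`, the partial products
`∏_{i<j} (1+2τ_i)/(2(1+τ_i))` converge to `(1+2τ₀)/(2(1+τ₀)+(k-1)⁻¹)`, which
lies in `(0,1)`. -/
theorem alpha_partial_products_converge (k τ₀ : ℝ) (hk : 1 < k)
    (hτ₀ : 0 ≤ τ₀) (hτ₀' : τ₀ < 1/2)
    (τ : ℕ → ℝ) (h0 : τ 0 = τ₀)
    (hrec : ∀ i : ℕ, τ (i + 1) = k * (1 + τ i) - 1/2) :
    Tendsto (fun j => ∏ i ∈ Finset.range j, (1 + 2 * τ i) / (2 * (1 + τ i)))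
      atTop (nhds ((1 + 2 * τ₀) / (2 * (1 + τ₀) + (k - 1)⁻¹))) ∧
    (1 + 2 * τ₀) / (2 * (1 + τ₀) + (k - 1)⁻¹) ∈ Set.Ioo (0:ℝ) 1 := by
  have hk0 : (0:ℝ) < k := lt_trans one_pos hk
  have hk1 : (0:ℝ) < k - 1 := sub_pos.mpr hk
  have hk1' : k - 1 ≠ 0 := ne_of_gt hk1
  have hk0' : k ≠ 0 := ne_of_gt hk0
  set C : ℝ := 2 * (1 + τ₀) + (k - 1)⁻¹ with hC
  have hinv : (0:ℝ) < (k - 1)⁻¹ := inv_pos.mpr hk1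
  have hCpos : 0 < C := by rw [hC]; nlinarith
  -- τ is nonnegative
  have hτnn : ∀ j, 0 ≤ τ j := by
    intro j
    induction j with
    | zero => rw [h0]; exact hτ₀
    | succ i ih => rw [hrec i]; nlinarith
  -- closed form for 1 + 2 τ j
  have htf : ∀ j, 1 + 2 * τ j = k ^ j * C - k / (k - 1) := by
    intro j
    induction j with
    | zero =>
      rw [h0, pow_zero, one_mul, hC]
      field_simp
      ring
    | succ i ih =>
      rw [hrec i, pow_succ]
      have hinv1 : (k - 1) * (k - 1)⁻¹ = 1 := mul_inv_cancel₀ hk1'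
      field_simp at ih ⊢
      nlinarith [ih]
  set D : ℕ → ℝ := fun j => C - k / (k - 1) * (1 / k) ^ j with hD
  have hkD : ∀ j, k ^ j * D j = 1 + 2 * τ j := by
    intro j
    have hpow : (k:ℝ) ^ j * (1 / k) ^ j = 1 := by
      rw [← mul_pow]; field_simp; exact one_pow j
    rw [htf j]
    show k ^ j * (C - k / (k - 1) * (1 / k) ^ j) = k ^ j * C - k / (k - 1)
    linear_combination (-(k / (k - 1))) * hpow
  have hDpos : ∀ j, 0 < D j := by
    intro j
    have h1 : 0 < 1 + 2 * τ j := by nlinarith [hτnn j]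
    have h2 : 0 < (k:ℝ) ^ j := pow_pos hk0 j
    nlinarith [hkD j]
  -- product formula
  have hprod : ∀ j, ∏ i ∈ Finset.range j, (1 + 2 * τ i) / (2 * (1 + τ i))
      = (1 + 2 * τ₀) / D j := by
    intro j
    induction j with
    | zero =>
      have e : D 0 = 1 + 2 * τ₀ := by
        have := hkD 0
        rw [pow_zero, one_mul, h0] at this
        exact this
      rw [Finset.prod_range_zero, e,
        div_self (ne_of_gt (by nlinarith : (0:ℝ) < 1 + 2 * τ₀))]
    | succ j ih =>
      rw [Finset.prod_range_succ, ih]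
      have h1 : 0 < 1 + 2 * τ j := by nlinarith [hτnn j]
      have h2 : 0 < 2 * (1 + τ j) := by nlinarith [hτnn j]
      have hkey : D (j+1) * (1 + 2 * τ j) = D j * (2 * (1 + τ j)) := by
        have e1 := hkD j
        have e2 := hkD (j+1)
        have e3 : 1 + 2 * τ (j+1) = 2 * k * (1 + τ j) := by rw [hrec j]; ring
        have h4 : (0:ℝ) < k ^ j := pow_pos hk0 j
        rw [e3] at e2
        rw [pow_succ] at e2
        have e2' : k ^ j * D (j+1) = 2 * (1 + τ j) := by
          apply mul_left_cancel₀ hk0'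
          linear_combination e2
        have hmain : k ^ j * (D (j+1) * (1 + 2 * τ j)) = k ^ j * (D j * (2 * (1 + τ j))) := by
          linear_combination (1 + 2 * τ j) * e2' - (2 * (1 + τ j)) * e1
        exact mul_left_cancel₀ (ne_of_gt h4) hmain
      rw [div_mul_div_comm]
      rw [div_eq_div_iff (ne_of_gt (mul_pos (hDpos j) h2))
        (ne_of_gt (hDpos (j+1)))]
      linear_combination (1 + 2 * τ₀) * hkey
  have hDlim : Tendsto D atTop (nhds C) := by
    have h1 : Tendsto (fun j : ℕ => (1 / k) ^ j) atTop (nhds 0) := by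
      apply tendsto_pow_atTop_nhds_zero_of_lt_one
      · positivity
      · rw [div_lt_one hk0]; exact hk
    have := (tendsto_const_nhds (x := C) (f := atTop)).sub
      ((tendsto_const_nhds (x := k / (k-1)) (f := atTop)).mul h1)
    simpa [hD] using this
  have hlim : Tendsto (fun j => (1 + 2 * τ₀) / D j) atTop (nhds ((1 + 2 * τ₀) / C)) :=
    tendsto_const_nhds.div hDlim (ne_of_gt hCpos)
  constructor
  · have := hlim.congr (fun j => (hprod j).symm)
    simpa [hC] using this
  · constructor
    · apply div_pos (by nlinarith) hCpos
    · rw [div_lt_one hCpos, hC]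
      nlinarith
end

section
/- Let a > 0 and ε > 0, and set φ(r) = exp(r^{2+ε}) for r ≥ 0. Then the function F : [0,∞) → [0,∞) defined by the iterated integral F(r) = ∫₀^r φ(s)^{−a} ( ∫₀^s φ(τ)^{a} ( ∫₀^τ φ(γ)^{−a} ( ∫₀^γ φ(η)^{a} dη ) dγ ) dτ ) ds is bounded: sup_{r ≥ 0} F(r) < ∞. -/
open Real MeasureTheory intervalIntegral

private lemma aux_exp_cont (c p : ℝ) (hp0 : 0 < p) :
    Continuous fun x : ℝ => Real.exp (x ^ p * c) :=
  Real.continuous_exp.comp ((Real.continuous_rpow_const hp0.le).mul continuous_const)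

private lemma aux_E_bound1 (a p : ℝ) (ha : 0 < a) (hp0 : 0 < p) (x : ℝ) (hx : 0 ≤ x) :
    (∫ η in (0:ℝ)..x, Real.exp (η ^ p * a)) ≤ x * Real.exp (x ^ p * a) := by
  have : (∫ η in (0:ℝ)..x, Real.exp (η ^ p * a)) ≤ ∫ _η in (0:ℝ)..x, Real.exp (x ^ p * a) := by
    apply intervalIntegral.integral_mono_on hx ((aux_exp_cont a p hp0).intervalIntegrable 0 x)
      (continuous_const.intervalIntegrable 0 x)
    intro u hu
    have : u ^ p ≤ x ^ p := Real.rpow_le_rpow hu.1 hu.2 hp0.le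
    exact Real.exp_le_exp.2 (by nlinarith)
  simpa using this

private lemma aux_E_bound2 (a p : ℝ) (ha : 0 < a) (hp : 2 < p) (x : ℝ) (hx : 0 < x) :
    (∫ η in (0:ℝ)..x, Real.exp (η ^ p * a)) ≤ Real.exp (x ^ p * a) * (x ^ (1 - p) / a) := by
  have hp0 : (0:ℝ) < p := by linarith
  set c : ℝ := a * x ^ (p - 1) with hc
  have hxp1 : (0:ℝ) < x ^ (p - 1) := Real.rpow_pos_of_pos hx _
  have hcpos : 0 < c := mul_pos ha hxp1
  have step1 : (∫ η in (0:ℝ)..x, Real.exp (η ^ p * a)) ≤ ∫ η in (0:ℝ)..x, Real.exp (c * η) := by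
    apply intervalIntegral.integral_mono_on hx.le
    · exact (aux_exp_cont a p hp0).intervalIntegrable 0 x
    · exact (Real.continuous_exp.comp (continuous_const.mul continuous_id)).intervalIntegrable 0 x
    · intro u hu
      apply Real.exp_le_exp.2
      rcases eq_or_lt_of_le hu.1 with h0 | h0
      · simp [← h0, Real.zero_rpow (ne_of_gt hp0)]
      · have h1 : u ^ p = u ^ (p - 1) * u := by
          rw [← Real.rpow_add_one (ne_of_gt h0)]; ring_nf
        have h2 : u ^ (p - 1) ≤ x ^ (p - 1) := Real.rpow_le_rpow h0.le hu.2 (by linarith)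
        rw [h1, hc]
        nlinarith [mul_le_mul_of_nonneg_right h2 h0.le]
  have step2 : (∫ η in (0:ℝ)..x, Real.exp (c * η)) = (Real.exp (c * x) - 1) / c := by
    rw [intervalIntegral.integral_comp_mul_left (fun y => Real.exp y) (ne_of_gt hcpos)]
    simp [integral_exp, smul_eq_mul]
    ring
  have hcx : c * x = x ^ p * a := by
    rw [hc]
    have : x ^ (p - 1) * x = x ^ p := by
      rw [← Real.rpow_add_one (ne_of_gt hx)]; ring_nf
    nlinarith [this]
  have hinv : x ^ (1 - p) = (x ^ (p - 1))⁻¹ := by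
    rw [show (1 - p : ℝ) = -(p - 1) by ring, Real.rpow_neg hx.le]
  calc (∫ η in (0:ℝ)..x, Real.exp (η ^ p * a)) ≤ (Real.exp (c * x) - 1) / c := by
        rw [← step2]; exact step1
    _ ≤ Real.exp (c * x) / c := by
        gcongr
        linarith [Real.exp_pos (c * x)]
    _ = Real.exp (x ^ p * a) * (x ^ (1 - p) / a) := by
        rw [hcx, hinv, hc]
        field_simp

private lemma aux_HB (a p : ℝ) (ha : 0 < a) (hp : 2 < p) (D : ℝ → ℝ) (hDc : Continuous D)
    (hD1 : ∀ x : ℝ, 0 ≤ x → D x ≤ x)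
    (hD2 : ∀ x : ℝ, 0 < x → D x ≤ x ^ (1 - p) / a) (τ : ℝ) (hτ : 0 ≤ τ) :
    (∫ γ in (0:ℝ)..τ, D γ) ≤ 1 / 2 + 1 / (a * (p - 2)) := by
  have hC2 : 0 < a * (p - 2) := mul_pos ha (by linarith)
  have half : ∀ t : ℝ, 0 ≤ t → t ≤ 1 → (∫ γ in (0:ℝ)..t, D γ) ≤ 1 / 2 := by
    intro t ht ht1
    have : (∫ γ in (0:ℝ)..t, D γ) ≤ ∫ γ in (0:ℝ)..t, γ := by
      apply intervalIntegral.integral_mono_on ht (hDc.intervalIntegrable 0 t)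
        (continuous_id.intervalIntegrable 0 t)
      intro u hu; exact hD1 u hu.1
    rw [integral_id] at this
    nlinarith
  rcases le_or_gt τ 1 with h1 | h1
  · have : (0:ℝ) < 1 / (a * (p - 2)) := by positivity
    linarith [half τ hτ h1]
  · have hsplit : (∫ γ in (0:ℝ)..1, D γ) + (∫ γ in (1:ℝ)..τ, D γ) = ∫ γ in (0:ℝ)..τ, D γ :=
      intervalIntegral.integral_add_adjacent_intervals (hDc.intervalIntegrable 0 1)
        (hDc.intervalIntegrable 1 τ)
    have htail : (∫ γ in (1:ℝ)..τ, D γ) ≤ 1 / (a * (p - 2)) := by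
      have hint : IntervalIntegrable (fun γ : ℝ => γ ^ (1 - p) / a) volume 1 τ := by
        apply ContinuousOn.intervalIntegrable
        apply ContinuousOn.div_const
        intro u hu
        have hu1 : (1:ℝ) ≤ u := by
          rcases Set.mem_uIcc.1 hu with h | h
          · exact h.1
          · linarith [h.1, h.2]
        exact (Real.continuousAt_rpow_const u _ (Or.inl (by linarith))).continuousWithinAt
      have hmono : (∫ γ in (1:ℝ)..τ, D γ) ≤ ∫ γ in (1:ℝ)..τ, γ ^ (1 - p) / a := by
        apply intervalIntegral.integral_mono_on h1.le (hDc.intervalIntegrable 1 τ) hint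
        intro u hu; exact hD2 u (by linarith [hu.1])
      have hval : (∫ γ in (1:ℝ)..τ, γ ^ (1 - p) / a)
          = (τ ^ (2 - p) - 1) / (2 - p) / a := by
        rw [intervalIntegral.integral_div, integral_rpow]
        · norm_num
          rw [show (1 - p + 1 : ℝ) = 2 - p by ring]
        · right
          constructor
          · intro h; rw [show (1:ℝ) - p = -1 ↔ p = 2 by constructor <;> intro <;> linarith] at h; linarith
          · intro h
            rcases Set.mem_uIcc.1 h with h' | h' <;> linarith [h'.1, h'.2]
      have hτpow : 0 ≤ τ ^ (2 - p) := Real.rpow_nonneg (by linarith) _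
      have : (τ ^ (2 - p) - 1) / (2 - p) / a ≤ 1 / (a * (p - 2)) := by
        have hne : (2 - p : ℝ) ≠ 0 := by intro h; linarith [h]
        have heq : (τ ^ (2 - p) - 1) / (2 - p) / a = (1 - τ ^ (2 - p)) / (a * (p - 2)) := by
          have hne' : (p - 2 : ℝ) ≠ 0 := by intro h; linarith [h]
          field_simp
          ring
        rw [heq]
        gcongr
        linarith
      linarith
    have hhead := half 1 zero_le_one le_rfl
    linarith

/-- The key boundedness claim in the paper's Appendix example: for `a > 0`, `ε > 0`
and `φ(r) = exp(r^{2+ε})`, the iterated integral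
`F(r) = ∫₀^r φ⁻ᵃ ∫₀^s φᵃ ∫₀^τ φ⁻ᵃ ∫₀^γ φᵃ` is bounded on `[0,∞)`. -/
theorem appendix_iterated_integral_bounded (a ε : ℝ) (ha : 0 < a) (hε : 0 < ε)
    (φ F : ℝ → ℝ)
    (hφ : ∀ r, φ r = Real.exp (r ^ (2 + ε)))
    (hF : ∀ r, F r = ∫ s in (0:ℝ)..r, (φ s) ^ (-a) *
        ∫ τ in (0:ℝ)..s, (φ τ) ^ a *
          ∫ γ in (0:ℝ)..τ, (φ γ) ^ (-a) *
            ∫ η in (0:ℝ)..γ, (φ η) ^ a) :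
    ∃ M : ℝ, ∀ r : ℝ, 0 ≤ r → F r ≤ M := by
  set p : ℝ := 2 + ε with hpdef
  have hp : 2 < p := by rw [hpdef]; linarith
  have hp0 : (0:ℝ) < p := by linarith
  set C₁ : ℝ := 1 / 2 + 1 / (a * (p - 2)) with hC₁
  have hC₁pos : 0 < C₁ := by
    have : 0 < a * (p - 2) := mul_pos ha (by linarith)
    rw [hC₁]; positivity
  set E : ℝ → ℝ := fun x => ∫ η in (0:ℝ)..x, Real.exp (η ^ p * a) with hEdef
  have hEcont : Continuous E :=
    intervalIntegral.continuous_primitive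
      (fun u v => (aux_exp_cont a p hp0).intervalIntegrable u v) 0
  have hEnonneg : ∀ x : ℝ, 0 ≤ x → 0 ≤ E x := fun x hx =>
    intervalIntegral.integral_nonneg hx (fun u _ => (Real.exp_pos _).le)
  set D : ℝ → ℝ := fun x => Real.exp (x ^ p * -a) * E x with hDdef
  have hDc : Continuous D := (aux_exp_cont (-a) p hp0).mul hEcont
  have hexpcancel : ∀ x : ℝ, Real.exp (x ^ p * -a) * Real.exp (x ^ p * a) = 1 := by
    intro x
    rw [← Real.exp_add, show x ^ p * -a + x ^ p * a = 0 by ring, Real.exp_zero]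
  have hD1 : ∀ x : ℝ, 0 ≤ x → D x ≤ x := by
    intro x hx
    have h := mul_le_mul_of_nonneg_left (aux_E_bound1 a p ha hp0 x hx)
      (Real.exp_pos (x ^ p * -a)).le
    calc D x ≤ Real.exp (x ^ p * -a) * (x * Real.exp (x ^ p * a)) := h
      _ = x * (Real.exp (x ^ p * -a) * Real.exp (x ^ p * a)) := by ring
      _ = x := by rw [hexpcancel]; ring
  have hD2 : ∀ x : ℝ, 0 < x → D x ≤ x ^ (1 - p) / a := by
    intro x hx
    have h := mul_le_mul_of_nonneg_left (aux_E_bound2 a p ha hp x hx)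
      (Real.exp_pos (x ^ p * -a)).le
    calc D x ≤ Real.exp (x ^ p * -a) * (Real.exp (x ^ p * a) * (x ^ (1 - p) / a)) := h
      _ = (Real.exp (x ^ p * -a) * Real.exp (x ^ p * a)) * (x ^ (1 - p) / a) := by ring
      _ = x ^ (1 - p) / a := by rw [hexpcancel]; ring
  have HB : ∀ τ : ℝ, 0 ≤ τ → (∫ γ in (0:ℝ)..τ, D γ) ≤ C₁ :=
    fun τ hτ => aux_HB a p ha hp D hDc hD1 hD2 τ hτ
  set H : ℝ → ℝ := fun τ => ∫ γ in (0:ℝ)..τ, D γ with hHdef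
  have hHcont : Continuous H :=
    intervalIntegral.continuous_primitive (fun u v => hDc.intervalIntegrable u v) 0
  have hHnonneg : ∀ τ : ℝ, 0 ≤ τ → 0 ≤ H τ := fun τ hτ =>
    intervalIntegral.integral_nonneg hτ
      (fun u hu => mul_nonneg (Real.exp_pos _).le (hEnonneg u hu.1))
  set G : ℝ → ℝ := fun s => ∫ τ in (0:ℝ)..s, Real.exp (τ ^ p * a) * H τ with hGdef
  have hGcont : Continuous G :=
    intervalIntegral.continuous_primitive
      (fun u v => ((aux_exp_cont a p hp0).mul hHcont).intervalIntegrable u v) 0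
  have hGbound : ∀ s : ℝ, 0 ≤ s → G s ≤ C₁ * E s := by
    intro s hs
    have h1 : G s ≤ ∫ τ in (0:ℝ)..s, Real.exp (τ ^ p * a) * C₁ := by
      apply intervalIntegral.integral_mono_on hs
        (((aux_exp_cont a p hp0).mul hHcont).intervalIntegrable 0 s)
        (((aux_exp_cont a p hp0).mul continuous_const).intervalIntegrable 0 s)
      intro u hu
      exact mul_le_mul_of_nonneg_left (HB u hu.1) (Real.exp_pos _).le
    have h2 : (∫ τ in (0:ℝ)..s, Real.exp (τ ^ p * a) * C₁) = C₁ * E s := by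
      rw [intervalIntegral.integral_mul_const, hEdef]
      ring
    linarith
  refine ⟨C₁ * C₁, fun r hr => ?_⟩
  have hFr : F r = ∫ s in (0:ℝ)..r, Real.exp (s ^ p * -a) * G s := by
    rw [hF r]
    simp only [hGdef, hHdef, hDdef, hEdef, hφ, ← Real.exp_mul, ← hpdef]
  rw [hFr]
  have hmono : (∫ s in (0:ℝ)..r, Real.exp (s ^ p * -a) * G s)
      ≤ ∫ s in (0:ℝ)..r, C₁ * D s := by
    apply intervalIntegral.integral_mono_on hr
      (((aux_exp_cont (-a) p hp0).mul hGcont).intervalIntegrable 0 r)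
      ((continuous_const.mul hDc).intervalIntegrable 0 r)
    intro u hu
    have h := mul_le_mul_of_nonneg_left (hGbound u hu.1) (Real.exp_pos (u ^ p * -a)).le
    calc Real.exp (u ^ p * -a) * G u ≤ Real.exp (u ^ p * -a) * (C₁ * E u) := h
      _ = C₁ * D u := by rw [hDdef]; ring
  have hfin : (∫ s in (0:ℝ)..r, C₁ * D s) = C₁ * H r := by
    rw [intervalIntegral.integral_const_mul, hHdef]
  have := mul_le_mul_of_nonneg_left (HB r hr) hC₁pos.le
  linarith [hmono, hfin.le, hfin.ge, this]
end
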